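/- arXiv:2101.07435 — 3 statements merged into one kernel-verified Lean document; each statement's English description precedes it below -/
import Mathlib

section
/- Let agent i have an additive cost function and let S_1, S_2 ⊆ E. If MMS_i(2, S_1 ∪ S_2) > MMS_i(2, S_1), then MMS_i(2, S_1 ∪ S_2) ≤ (1/2)·c_i(S_1) + c_i(S_2). -/
open Finset

/-- `T` is a `k`-partition of the bundle `S`: pairwise disjoint bundles whose union is `S`. -/
def IsPartitionOf {E : Type*} [DecidableEq E] {k : ℕ} (T : Fin k → Finset E) (S : Finset E) :
    Prop :=
  (∀ i j : Fin k, i ≠ j → Disjoint (T i) (T j)) ∧ Finset.univ.biUnion T = S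

/-- The maximin share of cost function `c` on `S` among `k` agents:
the minimum over `k`-partitions of `S` of the maximum cost of a bundle. -/
noncomputable def MMS {E : Type*} [DecidableEq E] (c : Finset E → ℝ) (k : ℕ) (S : Finset E) :
    ℝ :=
  sInf { m : ℝ | ∃ T : Fin k → Finset E, IsPartitionOf T S ∧ m = ⨆ j : Fin k, c (T j) }

/-- `c` is a nonnegative additive cost function. -/
def AdditiveCost {E : Type*} [DecidableEq E] (c : Finset E → ℝ) : Prop :=
  (∀ S : Finset E, 0 ≤ c S) ∧ ∀ S : Finset E, c S = ∑ e ∈ S, c {e}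

/-- `c` is a nonnegative monotone cost function with `c ∅ = 0`. -/
def MonotoneCost {E : Type*} (c : Finset E → ℝ) : Prop :=
  (∀ S : Finset E, 0 ≤ c S) ∧ c ∅ = 0 ∧ ∀ ⦃S T : Finset E⦄, S ⊆ T → c S ≤ c T

/-- `c` is subadditive. -/
def SubadditiveCost {E : Type*} [DecidableEq E] (c : Finset E → ℝ) : Prop :=
  ∀ S T : Finset E, c (S ∪ T) ≤ c S + c T

/-- `c` is submodular. -/
def SubmodularCost {E : Type*} [DecidableEq E] (c : Finset E → ℝ) : Prop :=
  ∀ S T : Finset E, c (S ∪ T) + c (S ∩ T) ≤ c S + c T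

/-- `A` is an allocation of all chores among the `n` agents. -/
def IsAllocation {E : Type*} [DecidableEq E] [Fintype E] {n : ℕ} (A : Fin n → Finset E) : Prop :=
  IsPartitionOf A Finset.univ

/-- `A` is `α`-envy-free. -/
def IsEF {E : Type*} {n : ℕ} (α : ℝ) (c : Fin n → Finset E → ℝ) (A : Fin n → Finset E) : Prop :=
  ∀ i j, c i (A i) ≤ α * c i (A j)

/-- `A` is `α`-envy-free up to one item. -/
def IsEF1 {E : Type*} [DecidableEq E] {n : ℕ} (α : ℝ) (c : Fin n → Finset E → ℝ)
    (A : Fin n → Finset E) : Prop :=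
  ∀ i j, i ≠ j → A i = ∅ ∨ ∃ e ∈ A i, c i (A i \ {e}) ≤ α * c i (A j)

/-- `A` is `α`-envy-free up to any (positive-cost) item. -/
def IsEFX {E : Type*} [DecidableEq E] {n : ℕ} (α : ℝ) (c : Fin n → Finset E → ℝ)
    (A : Fin n → Finset E) : Prop :=
  ∀ i j, i ≠ j → ∀ e ∈ A i, 0 < c i {e} → c i (A i \ {e}) ≤ α * c i (A j)

/-- `A` is an `α`-MMS allocation. -/
def IsMMSFair {E : Type*} [DecidableEq E] [Fintype E] {n : ℕ} (α : ℝ)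
    (c : Fin n → Finset E → ℝ) (A : Fin n → Finset E) : Prop :=
  ∀ i, c i (A i) ≤ α * MMS (c i) n Finset.univ

/-- `A` is an `α`-PMMS allocation. -/
def IsPMMS {E : Type*} [DecidableEq E] {n : ℕ} (α : ℝ)
    (c : Fin n → Finset E → ℝ) (A : Fin n → Finset E) : Prop :=
  ∀ i j, i ≠ j → c i (A i) ≤ α * MMS (c i) 2 (A i ∪ A j)

/-- The optimal (minimum) social cost over all allocations. -/
noncomputable def OPT {E : Type*} [DecidableEq E] [Fintype E] {n : ℕ}
    (c : Fin n → Finset E → ℝ) : ℝ :=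
  sInf { s : ℝ | ∃ A : Fin n → Finset E, IsAllocation A ∧ s = ∑ i, c i (A i) }

lemma fin2_sup (f : Fin 2 → ℝ) : (⨆ j, f j) = max (f 0) (f 1) := by
  apply le_antisymm
  · apply ciSup_le
    intro j
    fin_cases j
    · exact le_max_left _ _
    · exact le_max_right _ _
  · apply max_le <;>
      exact le_ciSup (Set.Finite.bddAbove (Set.finite_range f)) _

lemma mmsSet_finite {E : Type*} [DecidableEq E] [Fintype E] (c : Finset E → ℝ) (k : ℕ)
    (S : Finset E) :
    { m : ℝ | ∃ T : Fin k → Finset E, IsPartitionOf T S ∧ m = ⨆ j : Fin k, c (T j) }.Finite := by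
  apply Set.Finite.subset (Set.finite_range (fun T : Fin k → Finset E => ⨆ j, c (T j)))
  rintro m ⟨T, _, rfl⟩
  exact ⟨T, rfl⟩

lemma biUnion_fin2 {E : Type*} [DecidableEq E] (T : Fin 2 → Finset E) :
    Finset.univ.biUnion T = T 0 ∪ T 1 := by
  ext e; simp [Fin.exists_fin_two]

lemma mmsSet_nonempty {E : Type*} [DecidableEq E] (c : Finset E → ℝ) (S : Finset E) :
    { m : ℝ | ∃ T : Fin 2 → Finset E, IsPartitionOf T S ∧ m = ⨆ j : Fin 2, c (T j) }.Nonempty := by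
  refine ⟨_, ![S, ∅], ⟨?_, ?_⟩, rfl⟩
  · intro i j hij
    fin_cases i <;> fin_cases j <;> simp_all
  · rw [biUnion_fin2]; simp

lemma addcost_union {E : Type*} [DecidableEq E] {c : Finset E → ℝ} (hc : AdditiveCost c)
    {X Y : Finset E} (hd : Disjoint X Y) : c (X ∪ Y) = c X + c Y := by
  rw [hc.2 (X ∪ Y), hc.2 X, hc.2 Y, Finset.sum_union hd]

lemma addcost_mono {E : Type*} [DecidableEq E] {c : Finset E → ℝ} (hc : AdditiveCost c)
    {X Y : Finset E} (hXY : X ⊆ Y) : c X ≤ c Y := by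
  rw [hc.2 X, hc.2 Y]
  exact Finset.sum_le_sum_of_subset_of_nonneg hXY (fun e _ _ => hc.1 {e})

lemma mms_key {E : Type*} [DecidableEq E] [Fintype E] (c : Finset E → ℝ) (hc : AdditiveCost c)
    (S₁ S₂ a b : Finset E) (hd : Disjoint a b) (hab : a ∪ b = S₁) (hle : c a ≤ c b)
    (h : c b < MMS c 2 (S₁ ∪ S₂)) :
    MMS c 2 (S₁ ∪ S₂) ≤ (1 / 2) * c S₁ + c S₂ := by
  have haS : a ⊆ S₁ := hab ▸ Finset.subset_union_left
  have hbS : b ⊆ S₁ := hab ▸ Finset.subset_union_right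
  have hdisj2 : Disjoint (S₂ \ S₁) b :=
    (Finset.sdiff_disjoint).mono_right hbS
  have hdisj3 : Disjoint a (S₂ \ S₁) :=
    (Finset.sdiff_disjoint.symm).mono_left haS
  have hpart : IsPartitionOf ![a ∪ (S₂ \ S₁), b] (S₁ ∪ S₂) := by
    constructor
    · intro i j hij
      fin_cases i <;> fin_cases j <;>
        simp_all [Finset.disjoint_union_left, Finset.disjoint_union_right, disjoint_comm]
    · rw [biUnion_fin2]
      show a ∪ (S₂ \ S₁) ∪ b = S₁ ∪ S₂
      rw [← hab]
      ext e
      simp only [Finset.mem_union, Finset.mem_sdiff]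
      tauto
  have hmem : (⨆ j : Fin 2, c ((![a ∪ (S₂ \ S₁), b]) j)) ∈
      { m : ℝ | ∃ T : Fin 2 → Finset E, IsPartitionOf T (S₁ ∪ S₂) ∧ m = ⨆ j : Fin 2, c (T j) } :=
    ⟨_, hpart, rfl⟩
  have hMle : MMS c 2 (S₁ ∪ S₂) ≤ max (c (a ∪ (S₂ \ S₁))) (c b) := by
    have := csInf_le (mmsSet_finite c 2 (S₁ ∪ S₂)).bddBelow hmem
    rwa [fin2_sup] at this
  have hMle' : MMS c 2 (S₁ ∪ S₂) ≤ c (a ∪ (S₂ \ S₁)) :=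
    (le_max_iff.mp hMle).resolve_right (by linarith)
  have h1 : c (a ∪ (S₂ \ S₁)) = c a + c (S₂ \ S₁) := addcost_union hc hdisj3
  have h2 : c (S₂ \ S₁) ≤ c S₂ := addcost_mono hc (Finset.sdiff_subset)
  have h3 : c a + c b = c S₁ := by rw [← addcost_union hc hd, hab]
  linarith

/-- Lemma 5.8: if `MMS_i(2, S₁ ∪ S₂) > MMS_i(2, S₁)`, then
`MMS_i(2, S₁ ∪ S₂) ≤ (1/2)·c_i(S₁) + c_i(S₂)`. -/
theorem mms_union_upper_bound {E : Type*} [DecidableEq E] [Fintype E]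
    (c : Finset E → ℝ) (hc : AdditiveCost c) (S₁ S₂ : Finset E)
    (h : MMS c 2 S₁ < MMS c 2 (S₁ ∪ S₂)) :
    MMS c 2 (S₁ ∪ S₂) ≤ (1 / 2) * c S₁ + c S₂ := by
  have hmem := (mmsSet_nonempty c S₁).csInf_mem (mmsSet_finite c 2 S₁)
  obtain ⟨T, hT, hval⟩ := hmem
  have hMMS : MMS c 2 S₁ = max (c (T 0)) (c (T 1)) := by
    rw [MMS, hval, fin2_sup]
  have hdisj : Disjoint (T 0) (T 1) := hT.1 0 1 (by decide)
  have hun : T 0 ∪ T 1 = S₁ := by rw [← biUnion_fin2, hT.2]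
  rcases le_total (c (T 0)) (c (T 1)) with hle | hle
  · have hb : c (T 1) < MMS c 2 (S₁ ∪ S₂) := by
      rw [hMMS, max_eq_right hle] at h; exact h
    exact mms_key c hc S₁ S₂ (T 0) (T 1) hdisj hun hle hb
  · have hb : c (T 0) < MMS c 2 (S₁ ∪ S₂) := by
      rw [hMMS, max_eq_left hle] at h; exact h
    exact mms_key c hc S₁ S₂ (T 1) (T 0) hdisj.symm (by rw [Finset.union_comm, hun]) hle hb
end

section
/- For every n ≥ 3 and every β with 1 ≤ β < 2, there exists an n-agent instance with additive cost functions and an MMS allocation that is not β-PMMS. -/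
open Finset

/-- Proposition 5.9: for every `n ≥ 3` and `1 ≤ β < 2`, there is an additive instance
with an MMS allocation that is not `β`-PMMS. -/
theorem MMS_not_betaPMMS (n : ℕ) (hn : 3 ≤ n) (β : ℝ) (hβ1 : 1 ≤ β) (hβ2 : β < 2) :
    ∃ (m : ℕ) (c : Fin n → Finset (Fin m) → ℝ) (A : Fin n → Finset (Fin m)),
      (∀ i, AdditiveCost (c i)) ∧ IsAllocation A ∧ IsMMSFair 1 c A ∧ ¬ IsPMMS β c A := by
  have he01 : (⟨0, by omega⟩ : Fin (2*n)) ≠ ⟨1, by omega⟩ := by simp [Fin.ext_iff]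
  refine ⟨2*n,
    (fun i S => if i.val = 0 then (S.card : ℝ) else 0),
    (fun i => if i.val = 0 then ({⟨0, by omega⟩, ⟨1, by omega⟩} : Finset (Fin (2*n)))
      else if i.val = 2 then Finset.univ \ {⟨0, by omega⟩, ⟨1, by omega⟩} else ∅),
    ?_, ?_, ?_, ?_⟩
  · intro i
    constructor
    · intro S; dsimp only; split <;> positivity
    · intro S
      by_cases hi : i.val = 0
      · simp only [hi, if_pos rfl, Finset.card_singleton, Nat.cast_one]
        rw [Finset.card_eq_sum_ones]
        push_cast
        rfl
      · simp [hi]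
  · constructor
    · intro a b hab
      have hne : a.val ≠ b.val := fun h => hab (Fin.ext h)
      by_cases ha0 : a.val = 0 <;> by_cases hb0 : b.val = 0 <;>
        by_cases ha2 : a.val = 2 <;> by_cases hb2 : b.val = 2 <;>
        simp_all [Finset.disjoint_left]
    · apply Finset.eq_univ_iff_forall.mpr
      intro x
      rw [Finset.mem_biUnion]
      by_cases hx : x ∈ ({⟨0, by omega⟩, ⟨1, by omega⟩} : Finset (Fin (2*n)))
      · exact ⟨⟨0, by omega⟩, Finset.mem_univ _, by simpa using hx⟩
      · refine ⟨⟨2, by omega⟩, Finset.mem_univ _, ?_⟩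
        simp only [show ((⟨2, by omega⟩ : Fin n)).val = 2 from rfl]
        simp [hx]
  · intro i
    by_cases hi : i.val = 0
    · simp only [one_mul, hi, reduceIte]
      rw [Finset.card_pair he01]
      push_cast
      apply le_csInf
      · refine ⟨_, ⟨fun j => if j.val = 0 then Finset.univ else ∅, ⟨?_, ?_⟩, rfl⟩⟩
        · intro a b hab
          rcases eq_or_ne a.val 0 with ha | ha
          · have hb : b.val ≠ 0 := fun h => hab (Fin.ext (by omega))
            simp [ha, hb]
          · simp [ha]
        · apply Finset.eq_univ_iff_forall.mpr
          intro x
          rw [Finset.mem_biUnion]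
          exact ⟨⟨0, by omega⟩, Finset.mem_univ _, by simp⟩
      · rintro x ⟨T, ⟨hdisj, huni⟩, rfl⟩
        have hsum : ∑ j, (T j).card = 2*n := by
          rw [← Finset.card_biUnion (fun a _ b _ hab => hdisj a b hab), huni,
            Finset.card_univ, Fintype.card_fin]
        have hex : ∃ j, 2 ≤ (T j).card := by
          by_contra hcon
          push_neg at hcon
          have hle : ∑ j, (T j).card ≤ ∑ _j : Fin n, 1 :=
            Finset.sum_le_sum (fun j _ => by have := hcon j; omega)
          simp at hle; omega
        obtain ⟨j, hj⟩ := hex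
        have h1 : (2:ℝ) ≤ ((T j).card : ℝ) := by exact_mod_cast hj
        exact h1.trans (le_ciSup (Finite.bddAbove_range fun j => ((T j).card : ℝ)) j)
    · simp only [one_mul, if_neg hi]
      apply Real.sInf_nonneg
      rintro x ⟨T, -, rfl⟩
      apply Real.iSup_nonneg
      intro j; dsimp only
      first
      | (split <;> positivity)
      | positivity
      | exact le_refl _
  · intro hP
    have h01 : (⟨0, by omega⟩ : Fin n) ≠ ⟨1, by omega⟩ := by simp [Fin.ext_iff]
    have key := hP ⟨0, by omega⟩ ⟨1, by omega⟩ h01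
    simp only [show ((⟨0, by omega⟩ : Fin n)).val = 0 from rfl,
      show ((⟨1, by omega⟩ : Fin n)).val = 1 from rfl] at key
    norm_num at key
    have hMle : MMS (fun S : Finset (Fin (2*n)) => (S.card : ℝ)) 2
        ({⟨0, by omega⟩, ⟨1, by omega⟩} : Finset (Fin (2*n))) ≤ 1 := by
      apply csInf_le
      · refine ⟨0, ?_⟩
        rintro x ⟨T, -, rfl⟩
        exact Real.iSup_nonneg fun j => by positivity
      · refine ⟨fun j => if j.val = 0 then {⟨0, by omega⟩} else {⟨1, by omega⟩}, ⟨?_, ?_⟩, ?_⟩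
        · intro a b hab
          rcases eq_or_ne a.val 0 with ha | ha
          · have hb : b.val ≠ 0 := fun h => hab (Fin.ext (by omega))
            simp [ha, hb, Finset.disjoint_singleton, he01]
          · have hb : b.val = 0 := by omega
            simp [ha, hb, Finset.disjoint_singleton, he01.symm]
        · ext x
          simp only [Finset.mem_biUnion, Finset.mem_univ, true_and]
          constructor
          · rintro ⟨j, hj⟩
            by_cases h0 : j.val = 0
            · simp only [h0, reduceIte, Finset.mem_singleton] at hj
              simp [hj]
            · simp only [h0, reduceIte, Finset.mem_singleton] at hj
              simp [hj]
          · intro hx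
            rw [Finset.mem_insert, Finset.mem_singleton] at hx
            rcases hx with h | h
            · exact ⟨⟨0, by omega⟩, by simp [h]⟩
            · exact ⟨⟨1, by omega⟩, by simp [h]⟩
        · have hconst : (fun j : Fin 2 => ((if j.val = 0 then ({⟨0, by omega⟩} : Finset (Fin (2*n)))
              else {⟨1, by omega⟩}).card : ℝ)) = fun _ => 1 := by
            funext j; split <;> simp
          rw [hconst, ciSup_const]
    have : β * MMS (fun S : Finset (Fin (2*n)) => (S.card : ℝ)) 2
        ({⟨0, by omega⟩, ⟨1, by omega⟩} : Finset (Fin (2*n))) ≤ β * 1 :=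
      mul_le_mul_of_nonneg_left hMle (by linarith)
    linarith
end

section
/- Assume n = 2 and both agents have additive, normalized cost functions. Then (i) for every such instance there exists an EF1 allocation A with SC(A) ≤ (5/4)·OPT, and (ii) for every ε > 0 there exists such an instance in which every EF1 allocation A satisfies SC(A) ≥ (5/4 − ε)·OPT. Hence the price of EF1 for two agents with additive cost functions is 5/4. -/
open Finset

/-!
Giving every chore to the agent who finds it cheaper is optimal. If this allocation is not EF1,
say for agent `v` with bundle `P` and `t = c_v(P)`, then `t > 1/2` and every chore of `P` costs
`v` less than `2t - 1`. Move chores of `P` to the other agent `o` in increasing order of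
`c_o / c_v`, stopping as soon as `v` is EF1; the chore moved last witnesses EF1 for `o`. By the
ratio order the moved set `S` satisfies `c_o(S) ≤ c_v(S) (1 - u) / t` with `u = c_o(Pᶜ)`, and
`c_v(S) < 2t - 1`, so the social cost exceeds `OPT = t + u` by at most
`(2t - 1)(1 - t - u) / t ≤ (t + u) / 4`, which is `(3t - 2)² ≥ 0` at `u = 0`.

For the lower bound take three chores costing `1 - 2t, t, t` to agent 0 and `0, 1/2, 1/2` to
agent 1, with `t` slightly above `1/3`. EF1 forces the two expensive chores apart, so every EF1
allocation costs at least `t + 1/2`, while `OPT = 2t`.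
-/

namespace AdditiveCost

variable {E : Type*} [DecidableEq E] {c : Finset E → ℝ}

lemma of_sum (w : E → ℝ) (hw : ∀ e, 0 ≤ w e) : AdditiveCost fun S => ∑ e ∈ S, w e :=
  ⟨fun _ => sum_nonneg fun e _ => hw e, fun _ => by simp only [sum_singleton]⟩

lemma mono (hc : AdditiveCost c) {S T : Finset E} (h : S ⊆ T) : c S ≤ c T := by
  rw [hc.2 S, hc.2 T]
  exact sum_le_sum_of_subset_of_nonneg h fun e _ _ => hc.1 {e}

lemma sdiff_of_subset (hc : AdditiveCost c) {S T : Finset E} (h : S ⊆ T) :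
    c (T \ S) = c T - c S := by
  rw [hc.2, hc.2 T, hc.2 S, sum_sdiff_eq_sub h]

lemma sdiff_singleton (hc : AdditiveCost c) {S : Finset E} {e : E} (he : e ∈ S) :
    c (S \ {e}) = c S - c {e} :=
  hc.sdiff_of_subset (singleton_subset_iff.2 he)

lemma erase (hc : AdditiveCost c) {S : Finset E} {e : E} (he : e ∈ S) :
    c (S.erase e) = c S - c {e} := by
  rw [← sdiff_singleton_eq_erase, hc.sdiff_singleton he]

lemma add_compl [Fintype E] (hc : AdditiveCost c) (S : Finset E) : c S + c Sᶜ = c univ := by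
  rw [hc.2 S, hc.2 Sᶜ, hc.2 univ, sum_add_sum_compl]

lemma pair (hc : AdditiveCost c) {e f : E} (hef : e ≠ f) : c {e, f} = c {e} + c {f} := by
  rw [hc.2, sum_pair hef]

lemma le_of_forall_singleton_le {c' : Finset E → ℝ} (hc : AdditiveCost c) (hc' : AdditiveCost c')
    {S : Finset E} (h : ∀ e ∈ S, c {e} ≤ c' {e}) : c S ≤ c' S := by
  rw [hc.2, hc'.2]
  exact sum_le_sum h

end AdditiveCost

section TwoAgents

variable {E : Type*} [DecidableEq E]

/-- Envy-freeness up to one chore of an agent with cost `c` and bundle `X` towards bundle `Y`. -/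
def EF1Toward (c : Finset E → ℝ) (X Y : Finset E) : Prop :=
  X = ∅ ∨ ∃ e ∈ X, c (X \ {e}) ≤ c Y

lemma lt_of_not_ef1Toward {c : Finset E → ℝ} {X Y : Finset E} (h : ¬ EF1Toward c X Y) {e : E}
    (he : e ∈ X) : c Y < c (X \ {e}) :=
  not_le.1 fun hle => h (Or.inr ⟨e, he, hle⟩)

lemma isEF1_one_fin_two_iff {c : Fin 2 → Finset E → ℝ} {A : Fin 2 → Finset E} :
    IsEF1 1 c A ↔ EF1Toward (c 0) (A 0) (A 1) ∧ EF1Toward (c 1) (A 1) (A 0) := by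
  simp [IsEF1, EF1Toward, Fin.forall_fin_two]

variable [Fintype E]

lemma isAllocation_fin_two_iff {A : Fin 2 → Finset E} : IsAllocation A ↔ A 1 = (A 0)ᶜ := by
  have hunion : univ.biUnion A = A 0 ∪ A 1 := by
    ext e
    simp [Fin.exists_fin_two]
  rw [eq_compl_iff_isCompl, isCompl_comm, isCompl_iff, codisjoint_iff, IsAllocation, IsPartitionOf,
    hunion]
  simp [Fin.forall_fin_two, disjoint_comm]

lemma isAllocation_pair (B : Finset E) : IsAllocation ![B, Bᶜ] :=
  isAllocation_fin_two_iff.2 rfl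

variable {c₀ c₁ : Finset E → ℝ}

lemma sum_min_le_cost_add_cost_compl (h₀ : AdditiveCost c₀) (h₁ : AdditiveCost c₁)
    (B : Finset E) : ∑ e, min (c₀ {e}) (c₁ {e}) ≤ c₀ B + c₁ Bᶜ := by
  rw [← sum_add_sum_compl B, h₀.2 B, h₁.2 Bᶜ]
  exact add_le_add (sum_le_sum fun e _ => min_le_left _ _) (sum_le_sum fun e _ => min_le_right _ _)

lemma cost_add_cost_compl_eq_sum_min (h₀ : AdditiveCost c₀) (h₁ : AdditiveCost c₁)
    {P : Finset E} (hP : ∀ e ∈ P, c₀ {e} ≤ c₁ {e}) (hPc : ∀ e ∈ Pᶜ, c₁ {e} ≤ c₀ {e}) :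
    c₀ P + c₁ Pᶜ = ∑ e, min (c₀ {e}) (c₁ {e}) := by
  rw [← sum_add_sum_compl P, h₀.2 P, h₁.2 Pᶜ]
  exact congrArg₂ (· + ·) (sum_congr rfl fun e he => (min_eq_left (hP e he)).symm)
    (sum_congr rfl fun e he => (min_eq_right (hPc e he)).symm)

lemma OPT_fin_two_eq_sum_min {c : Fin 2 → Finset E → ℝ} (hc : ∀ i, AdditiveCost (c i)) :
    OPT c = ∑ e, min (c 0 {e}) (c 1 {e}) := by
  refine IsLeast.csInf_eq
    ⟨⟨![univ.filter fun e => c 0 {e} ≤ c 1 {e}, _], isAllocation_pair _, ?_⟩, ?_⟩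
  · rw [Fin.sum_univ_two]
    refine (cost_add_cost_compl_eq_sum_min (hc 0) (hc 1) (fun e he => (mem_filter.1 he).2)
      fun e he => ?_).symm
    simp only [mem_compl, mem_filter, mem_univ, true_and, not_le] at he
    exact he.le
  · rintro s ⟨A, hA, rfl⟩
    rw [Fin.sum_univ_two, isAllocation_fin_two_iff.1 hA]
    exact sum_min_le_cost_add_cost_compl (hc 0) (hc 1) (A 0)

end TwoAgents

section RatioOrder

variable {E : Type*} {cv co : Finset E → ℝ}

/-- `co {s} / cv {s} ≤ co {r} / cv {r}`, cross-multiplied so that it is meaningful when `cv`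
vanishes. -/
def RatioLE (cv co : Finset E → ℝ) (s r : E) : Prop :=
  co {s} * cv {r} ≤ co {r} * cv {s}

lemma mul_le_mul_of_ratioLE [DecidableEq E] (hcv : AdditiveCost cv) (hco : AdditiveCost co)
    {S R : Finset E} (h : ∀ s ∈ S, ∀ r ∈ R, RatioLE cv co s r) : co S * cv R ≤ cv S * co R := by
  rw [hco.2 S, hcv.2 R, hcv.2 S, hco.2 R, sum_mul_sum, sum_mul_sum]
  exact sum_le_sum fun s hs => sum_le_sum fun r hr => (h s hs r hr).trans_eq (mul_comm _ _)

lemma exists_ratioLE_max (hcv : ∀ e, 0 ≤ cv {e}) (hco : ∀ e, 0 ≤ co {e}) {S : Finset E}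
    (hS : S.Nonempty) : ∃ m ∈ S, ∀ s ∈ S, RatioLE cv co s m := by
  by_cases hzero : ∃ m ∈ S, cv {m} = 0
  · obtain ⟨m, hm, hm0⟩ := hzero
    refine ⟨m, hm, fun s _ => ?_⟩
    rw [RatioLE, hm0, mul_zero]
    exact mul_nonneg (hco m) (hcv s)
  · have hpos : ∀ s ∈ S, 0 < cv {s} := fun s hs =>
      (hcv s).lt_of_ne fun h => hzero ⟨s, hs, h.symm⟩
    obtain ⟨m, hm, hmax⟩ := S.exists_max_image (fun s => co {s} / cv {s}) hS
    exact ⟨m, hm, fun s hs => (div_le_div_iff₀ (hpos s hs) (hpos m hm)).1 (hmax s hs)⟩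

lemma exists_ratio_prefix_boundary [DecidableEq E] (hcv : ∀ e, 0 ≤ cv {e})
    (hco : ∀ e, 0 ≤ co {e}) {P : Finset E} (Q : Finset E → Prop) (hP : Q P) (hempty : ¬ Q ∅) :
    ∃ S ⊆ P, ∃ m ∈ S, (∀ s ∈ S, ∀ r ∈ P \ S, RatioLE cv co s r) ∧ Q S ∧ ¬ Q (S.erase m) := by
  classical
  let F := P.powerset.filter fun S => (∀ s ∈ S, ∀ r ∈ P \ S, RatioLE cv co s r) ∧ Q S
  have hPF : P ∈ F := mem_filter.2 ⟨mem_powerset_self P, by simp, hP⟩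
  obtain ⟨S, hSF, hmin⟩ := F.exists_min_image card ⟨P, hPF⟩
  obtain ⟨hSP, hprefix, hQ⟩ := mem_filter.1 hSF
  have hSne : S.Nonempty := nonempty_iff_ne_empty.2 fun h => hempty (h ▸ hQ)
  obtain ⟨m, hm, hmax⟩ := exists_ratioLE_max hcv hco hSne
  refine ⟨S, mem_powerset.1 hSP, m, hm, hprefix, hQ, fun hQ' => ?_⟩
  have hprefix' : ∀ s ∈ S.erase m, ∀ r ∈ P \ S.erase m, RatioLE cv co s r := by
    intro s hs r hr
    by_cases hrm : r = m
    · exact hrm ▸ hmax s (mem_of_mem_erase hs)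
    · exact hprefix s (mem_of_mem_erase hs) r (by simp_all [mem_sdiff, mem_erase])
  have hF : S.erase m ∈ F :=
    mem_filter.2 ⟨mem_powerset.2 ((erase_subset m S).trans (mem_powerset.1 hSP)), hprefix', hQ'⟩
  exact (card_erase_lt_of_mem hm).not_ge (hmin _ hF)

end RatioOrder

lemma sub_le_quarter_of_mediant {t u σ W : ℝ} (hmed : W * t ≤ σ * (1 - u)) (hσ0 : 0 ≤ σ)
    (hσ : σ ≤ 2 * t - 1) (hu : 0 ≤ u) (hut : u ≤ 1 - t) : W - σ ≤ (t + u) / 4 := by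
  have ht : 0 < t := by linarith
  have hexcess : (W - σ) * t ≤ (2 * t - 1) * (1 - u - t) := by
    nlinarith [mul_le_mul_of_nonneg_right hσ (by linarith : (0 : ℝ) ≤ 1 - u - t)]
  have hsquare : 4 * ((2 * t - 1) * (1 - u - t)) ≤ (t + u) * t := by
    nlinarith [sq_nonneg (3 * t - 2)]
  nlinarith

lemma add_le_of_cross_mul_le {x y σ W u : ℝ} (hcross : W * x ≤ σ * y) (hxy : x ≤ y)
    (hσ : 0 ≤ σ) (hu : 0 ≤ u) (hslack : u < x - σ) : u + W ≤ y := by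
  have hx : 0 < x := by linarith
  refine le_of_mul_le_mul_right ?_ hx
  nlinarith [mul_le_mul_of_nonneg_left hxy (by linarith : 0 ≤ x - σ)]

section UpperBound

variable {E : Type*} [DecidableEq E] [Fintype E] {cv co : Finset E → ℝ}

theorem exists_ef1Toward_of_not_ef1Toward (hcv : AdditiveCost cv) (hco : AdditiveCost co)
    (hcv1 : cv univ = 1) (hco1 : co univ = 1) {P : Finset E} (hP : ∀ e ∈ P, cv {e} ≤ co {e})
    (hPc : ∀ e ∈ Pᶜ, co {e} ≤ cv {e}) (hviol : ¬ EF1Toward cv P Pᶜ) :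
    ∃ B, EF1Toward cv B Bᶜ ∧ EF1Toward co Bᶜ B ∧ cv B + co Bᶜ ≤ 5 / 4 * (cv P + co Pᶜ) := by
  -- `S` is the set of chores of `P` handed to the other agent, in increasing order of `co / cv`,
  -- until the first agent is EF1; `m` is the last of them.
  obtain ⟨S, hSP, m, hmS, hprefix, hQ, hQ'⟩ :=
    exists_ratio_prefix_boundary (P := P) (fun e => hcv.1 {e}) (fun e => hco.1 {e})
      (fun S => EF1Toward cv (P \ S) (P \ S)ᶜ) (by simp [EF1Toward]) (by rwa [sdiff_empty])
  have hmP : m ∈ P := hSP hmS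
  have hm' : m ∈ P \ S.erase m := by simp [hmP]
  have hm'' : m ∈ (P \ S)ᶜ := by simp [hmS]
  have hsmall := lt_of_not_ef1Toward hviol hmP
  have hboundary := lt_of_not_ef1Toward hQ' hm'
  have hcheb := mul_le_mul_of_ratioLE hcv hco hprefix
  have hcheb' := mul_le_mul_of_ratioLE (S := S.erase m) hcv hco fun s hs =>
    hprefix s (mem_of_mem_erase hs)
  have hxy : cv (P \ S) ≤ co (P \ S) :=
    hcv.le_of_forall_singleton_le hco fun e he => hP e (mem_sdiff.1 he).1
  have hu : co Pᶜ ≤ cv Pᶜ := hco.le_of_forall_singleton_le hcv hPc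
  have := hcv.add_compl P
  have := hcv.add_compl (P \ S.erase m)
  have := hco.add_compl P
  have := hco.add_compl (P \ S)
  have := hcv.sdiff_of_subset hSP
  have := hco.sdiff_of_subset hSP
  have := hcv.sdiff_of_subset ((erase_subset m S).trans hSP)
  have := hcv.erase hmS
  have := hco.erase hmS
  have := hcv.sdiff_singleton hm'
  have := hcv.sdiff_singleton hmP
  have := hco.sdiff_singleton hm''
  have hσ' : 0 ≤ cv (S.erase m) := hcv.1 _
  have hu0 : 0 ≤ co Pᶜ := hco.1 _
  refine ⟨P \ S, hQ, Or.inr ⟨m, hm'', ?_⟩, ?_⟩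
  · have := add_le_of_cross_mul_le hcheb' hxy hσ' hu0 (by linarith)
    linarith
  · have hmed : co S * cv P ≤ cv S * (1 - co Pᶜ) := by nlinarith
    have := sub_le_quarter_of_mediant hmed (hcv.1 S) (by linarith) hu0 (by linarith)
    linarith

theorem exists_ef1_le_five_fourths_OPT
    (c : Fin 2 → Finset E → ℝ) (hc : ∀ i, AdditiveCost (c i)) (hc1 : ∀ i, c i univ = 1) :
    ∃ A : Fin 2 → Finset E, IsAllocation A ∧ IsEF1 1 c A ∧ ∑ i, c i (A i) ≤ 5 / 4 * OPT c := by
  set P := univ.filter fun e => c 0 {e} ≤ c 1 {e}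
  have hP : ∀ e ∈ P, c 0 {e} ≤ c 1 {e} := fun e he => (mem_filter.1 he).2
  have hPc : ∀ e ∈ Pᶜ, c 1 {e} ≤ c 0 {e} := fun e he => by
    simp only [P, mem_compl, mem_filter, mem_univ, true_and, not_le] at he
    exact he.le
  have hOPT : OPT c = c 0 P + c 1 Pᶜ := by
    rw [OPT_fin_two_eq_sum_min hc, cost_add_cost_compl_eq_sum_min (hc 0) (hc 1) hP hPc]
  suffices ∃ B, EF1Toward (c 0) B Bᶜ ∧ EF1Toward (c 1) Bᶜ B ∧ c 0 B + c 1 Bᶜ ≤ 5 / 4 * OPT c by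
    obtain ⟨B, h0, h1, hcost⟩ := this
    exact ⟨![B, Bᶜ], isAllocation_pair B, isEF1_one_fin_two_iff.2 ⟨h0, h1⟩,
      by simpa [Fin.sum_univ_two] using hcost⟩
  rw [hOPT]
  by_cases h0 : EF1Toward (c 0) P Pᶜ
  · by_cases h1 : EF1Toward (c 1) Pᶜ P
    · exact ⟨P, h0, h1, by linarith [(hc 0).1 P, (hc 1).1 Pᶜ]⟩
    · obtain ⟨B, hB1, hB0, hcost⟩ := exists_ef1Toward_of_not_ef1Toward (hc 1) (hc 0) (hc1 1)
        (hc1 0) hPc (by simpa using hP) (by rwa [compl_compl])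
      refine ⟨Bᶜ, by rwa [compl_compl], by rwa [compl_compl], ?_⟩
      rw [compl_compl] at hcost ⊢
      linarith
  · exact exists_ef1Toward_of_not_ef1Toward (hc 0) (hc 1) (hc1 0) (hc1 1) hP hPc h0

end UpperBound

lemma not_ef1Toward_compl_of_pair {E : Type*} [DecidableEq E] [Fintype E] {c : Finset E → ℝ}
    (hc : AdditiveCost c) {X : Finset E} {e f : E} (he : e ∈ X) (hf : f ∈ X) (hef : e ≠ f)
    (h : c univ < c {e} + c {f} + min (c {e}) (c {f})) : ¬ EF1Toward c X Xᶜ := by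
  rintro (hX | ⟨g, hg, hle⟩)
  · simp [hX] at he
  · have hpair : c {e} + c {f} ≤ c X := by
      rw [← hc.pair hef]
      exact hc.mono (insert_subset he (singleton_subset_iff.2 hf))
    have hrest : min (c {e}) (c {f}) ≤ c (X \ {g}) := by
      by_cases hge : g = e
      · subst hge
        exact (min_le_right _ _).trans (hc.mono (by simp [hf, Ne.symm hef]))
      · exact (min_le_left _ _).trans (hc.mono (by simp [he, Ne.symm hge]))
    linarith [hc.add_compl X]

noncomputable def ef1LowerBoundCost (t : ℝ) : Fin 2 → Finset (Fin 3) → ℝ :=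
  fun i S => ∑ e ∈ S, ![![1 - 2 * t, t, t], ![0, 1 / 2, 1 / 2]] i e

section LowerBound

variable {t : ℝ}

lemma additiveCost_ef1LowerBoundCost (ht0 : 0 ≤ t) (ht : t ≤ 1 / 2) (i : Fin 2) :
    AdditiveCost (ef1LowerBoundCost t i) :=
  AdditiveCost.of_sum _ fun e => by fin_cases i <;> fin_cases e <;> simp <;> linarith

lemma ef1LowerBoundCost_univ (i : Fin 2) : ef1LowerBoundCost t i univ = 1 := by
  fin_cases i <;> simp [ef1LowerBoundCost, Fin.sum_univ_three] <;> ring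

lemma OPT_ef1LowerBoundCost (ht0 : 0 ≤ t) (ht : t ≤ 1 / 2) :
    OPT (ef1LowerBoundCost t) = 2 * t := by
  rw [OPT_fin_two_eq_sum_min (additiveCost_ef1LowerBoundCost ht0 ht)]
  have hmin₀ : min (1 - 2 * t) 0 = 0 := min_eq_right (by linarith)
  have hmin₁ : min t 2⁻¹ = t := min_eq_left (by linarith)
  simp [ef1LowerBoundCost, Fin.sum_univ_three, hmin₀, hmin₁]
  ring

lemma le_cost_of_isEF1_ef1LowerBoundCost (ht : 1 / 3 < t) (ht' : t ≤ 1 / 2)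
    {A : Fin 2 → Finset (Fin 3)} (hA : IsAllocation A) (hEF1 : IsEF1 1 (ef1LowerBoundCost t) A) :
    t + 1 / 2 ≤ ∑ i, ef1LowerBoundCost t i (A i) := by
  have hc := additiveCost_ef1LowerBoundCost (by linarith) ht'
  rw [isAllocation_fin_two_iff] at hA
  rw [isEF1_one_fin_two_iff, hA] at hEF1
  obtain ⟨hef0, hef1⟩ := hEF1
  have hsplit0 : ¬ (1 ∈ A 0 ∧ 2 ∈ A 0) := fun ⟨h1, h2⟩ =>
    not_ef1Toward_compl_of_pair (hc 0) h1 h2 (by decide)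
      (by rw [ef1LowerBoundCost_univ]; simp [ef1LowerBoundCost]; linarith) hef0
  have hsplit1 : ¬ (1 ∈ (A 0)ᶜ ∧ 2 ∈ (A 0)ᶜ) := fun ⟨h1, h2⟩ =>
    not_ef1Toward_compl_of_pair (hc 1) h1 h2 (by decide)
      (by rw [ef1LowerBoundCost_univ]; simp [ef1LowerBoundCost]; norm_num) (by rwa [compl_compl])
  obtain ⟨i, j, hi, hj, hci, hcj⟩ : ∃ i j, i ∈ A 0 ∧ j ∈ (A 0)ᶜ ∧
      ef1LowerBoundCost t 0 {i} = t ∧ ef1LowerBoundCost t 1 {j} = 1 / 2 := by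
    by_cases h1 : (1 : Fin 3) ∈ A 0
    · exact ⟨1, 2, h1, mem_compl.2 fun h2 => hsplit0 ⟨h1, h2⟩, by simp [ef1LowerBoundCost],
        by simp [ef1LowerBoundCost]⟩
    · refine ⟨2, 1, ?_, mem_compl.2 h1, by simp [ef1LowerBoundCost], by simp [ef1LowerBoundCost]⟩
      by_contra h2
      exact hsplit1 ⟨mem_compl.2 h1, mem_compl.2 h2⟩
  rw [Fin.sum_univ_two, hA]
  linarith [(hc 0).mono (singleton_subset_iff.2 hi), (hc 1).mono (singleton_subset_iff.2 hj)]

end LowerBound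

/-- Proposition 7.1: for two agents with additive normalized cost functions, the price of
EF1 is `5/4`: every instance admits an EF1 allocation of social cost at most `(5/4)·OPT`,
and for every `ε > 0` some instance forces every EF1 allocation to have social cost at
least `(5/4 - ε)·OPT`. -/
theorem price_of_EF1_two_agents :
    (∀ (E : Type) [DecidableEq E] [Fintype E] (c : Fin 2 → Finset E → ℝ),
      (∀ i, AdditiveCost (c i)) → (∀ i, c i Finset.univ = 1) →
      ∃ A : Fin 2 → Finset E, IsAllocation A ∧ IsEF1 1 c A ∧
        ∑ i, c i (A i) ≤ (5 / 4) * OPT c) ∧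
    (∀ ε : ℝ, 0 < ε →
      ∃ (m : ℕ) (c : Fin 2 → Finset (Fin m) → ℝ),
        (∀ i, AdditiveCost (c i)) ∧ (∀ i, c i Finset.univ = 1) ∧
        ∀ A : Fin 2 → Finset (Fin m), IsAllocation A → IsEF1 1 c A →
          (5 / 4 - ε) * OPT c ≤ ∑ i, c i (A i)) := by
  refine ⟨fun E _ _ c hc hc1 => exists_ef1_le_five_fourths_OPT c hc hc1, fun ε hε => ?_⟩
  obtain ⟨t, ht, ht', hratio⟩ :
      ∃ t : ℝ, 1 / 3 < t ∧ t ≤ 1 / 2 ∧ (5 / 4 - ε) * (2 * t) ≤ t + 1 / 2 := by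
    refine ⟨1 / 3 + min ε (1 / 2) / 3, ?_, ?_, ?_⟩ <;>
      nlinarith [lt_min hε (by norm_num : (0 : ℝ) < 1 / 2), min_le_left ε (1 / 2),
        min_le_right ε (1 / 2)]
  refine ⟨3, ef1LowerBoundCost t, additiveCost_ef1LowerBoundCost (by linarith) ht',
    ef1LowerBoundCost_univ, fun A hA hEF1 => ?_⟩
  rw [OPT_ef1LowerBoundCost (by linarith) ht']
  exact hratio.trans (le_cost_of_isEF1_ef1LowerBoundCost ht ht' hA hEF1)
end
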